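/- arXiv:2603.18580 — 3 statements merged into one kernel-verified Lean document; each statement's English description precedes it below -/
import Mathlib

section
/- If (U_j)_{j≥0} is a nested sequence of open sets around a point x of a finite topological space, then for each j ≥ 1 there exists a point a ∉ U_{j-1} such that U_j = U_{j-1} ∪ U_a, where U_a is the minimal open set containing a. -/
open Set Topology

/-- The minimal open set containing `x`: the intersection of all open sets containing `x`. -/
def minOpen (X : Type*) [TopologicalSpace X] (x : X) : Set X :=
  ⋂₀ {U : Set X | IsOpen U ∧ x ∈ U}

/-- A nested sequence of open sets around `x`: a sequence of open sets starting at the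
minimal open set of `x`, increasing, strictly increasing until it reaches the whole space
(after which it is stationary), with no open set strictly between consecutive terms. -/
def NestedSeq (X : Type*) [TopologicalSpace X] (x : X) (c : ℕ → Set X) : Prop :=
  c 0 = minOpen X x ∧ (∀ j, IsOpen (c j)) ∧
  (∀ j, c j ⊆ c (j + 1)) ∧
  (∀ j, c j ≠ c (j + 1) ∨ c j = Set.univ) ∧
  (∀ j, ∀ V : Set X, IsOpen V → c j ⊆ V → V ⊆ c (j + 1) → V = c j ∨ V = c (j + 1))

/-- The furtherness `Ψ(x,y)`: the least `k` such that `y` belongs to the `k`-th term of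
some nested sequence of open sets around `x`. -/
noncomputable def furth (X : Type*) [TopologicalSpace X] (x y : X) : ℕ :=
  sInf {k | ∃ c : ℕ → Set X, NestedSeq X x c ∧ y ∈ c k}

theorem stmt3 (X : Type*) [TopologicalSpace X] [Finite X] (x : X) (c : ℕ → Set X)
    (hc : NestedSeq X x c) (j : ℕ) (hj : c j ≠ c (j + 1)) :
    ∃ a : X, a ∉ c j ∧ c (j + 1) = c j ∪ minOpen X a := by
  obtain ⟨h0, hopen, hmono, hstr, hbetw⟩ := hc
  have hne : (c (j+1) \ c j).Nonempty := by
    rcases Set.exists_of_ssubset (ssubset_of_subset_of_ne (hmono j) hj) with ⟨a, ha, hna⟩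
    exact ⟨a, ha, hna⟩
  obtain ⟨a, haj1, haj⟩ := hne
  refine ⟨a, haj, ?_⟩
  have hmin_open : IsOpen (minOpen X a) := by
    have : {U : Set X | IsOpen U ∧ a ∈ U}.Finite := Set.toFinite _
    exact Set.Finite.isOpen_sInter this (fun U hU => hU.1)
  have hVopen : IsOpen (c j ∪ minOpen X a) := (hopen j).union hmin_open
  have hsub1 : c j ⊆ c j ∪ minOpen X a := Set.subset_union_left
  have hsub2 : c j ∪ minOpen X a ⊆ c (j+1) := by
    apply Set.union_subset (hmono j)
    exact Set.sInter_subset_of_mem ⟨hopen (j+1), haj1⟩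
  rcases hbetw j _ hVopen hsub1 hsub2 with h | h
  · exfalso
    apply haj
    rw [← h]
    exact Set.mem_union_right _ (fun U hU => hU.2)
  · exact h.symm
end

section
/- Let X be a finite topological space and x, y ∈ X with Ψ(x,y) = k. Then there exists a nested sequence (U_j)_{j≥0} of open sets around x such that U_k equals U_x ∪ U_y, the smallest open set containing both x and y. -/
open Set Topology

section Aux

variable {X : Type*} [TopologicalSpace X] [Finite X]

lemma isOpen_minOpen (x : X) : IsOpen (minOpen X x) :=
  (Set.toFinite _).isOpen_sInter fun _ hU => hU.1

lemma mem_minOpen (x : X) : x ∈ minOpen X x := fun _ hU => hU.2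

lemma minOpen_subset {U : Set X} (hU : IsOpen U) {z : X} (hz : z ∈ U) :
    minOpen X z ⊆ U := Set.sInter_subset_of_mem ⟨hU, hz⟩

/-- The set of minimal open sets contained in `U`. -/
def MS (U : Set X) : Set (Set X) := {S | (∃ z : X, minOpen X z = S) ∧ S ⊆ U}

/-- Rank of an open set: number of minimal open sets it contains. -/
noncomputable def rk (U : Set X) : ℕ := (MS U).ncard

lemma MS_mono {U V : Set X} (h : U ⊆ V) : MS U ⊆ MS V :=
  fun _ hS => ⟨hS.1, hS.2.trans h⟩

lemma rk_mono {U V : Set X} (h : U ⊆ V) : rk U ≤ rk V :=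
  Set.ncard_le_ncard (MS_mono h) (Set.toFinite _)

lemma rk_lt {U V : Set X} (hV : IsOpen V) (h : U ⊂ V) : rk U < rk V := by
  obtain ⟨w, hwV, hwU⟩ := Set.exists_of_ssubset h
  refine Set.ncard_lt_ncard ⟨MS_mono h.1, fun hsub => ?_⟩ (Set.toFinite _)
  have : minOpen X w ∈ MS U := hsub ⟨⟨w, rfl⟩, minOpen_subset hV hwV⟩
  exact hwU (this.2 (mem_minOpen w))

lemma rk_cover {U V : Set X} (hU : IsOpen U) (hV : IsOpen V) (hlt : U ⊂ V)
    (hcov : ∀ A : Set X, IsOpen A → U ⊆ A → A ⊆ V → A = U ∨ A = V) :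
    rk V = rk U + 1 := by
  obtain ⟨w, hwV, hwU⟩ := Set.exists_of_ssubset hlt
  have key : ∀ z : X, z ∈ V → z ∉ U → V = U ∪ minOpen X z := by
    intro z hzV hzU
    rcases hcov (U ∪ minOpen X z) (hU.union (isOpen_minOpen z))
      Set.subset_union_left (Set.union_subset hlt.1 (minOpen_subset hV hzV)) with h | h
    · exact absurd (h ▸ (Set.subset_union_right (mem_minOpen z) : z ∈ U ∪ minOpen X z)) hzU
    · exact h.symm
  have hMS : MS V = insert (minOpen X w) (MS U) := by
    ext S
    constructor
    · rintro ⟨⟨z, rfl⟩, hSV⟩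
      by_cases hzU : minOpen X z ⊆ U
      · exact Or.inr ⟨⟨z, rfl⟩, hzU⟩
      · left
        have hzU' : z ∉ U := fun hz => hzU (minOpen_subset hU hz)
        have hzV : z ∈ V := hSV (mem_minOpen z)
        have h1 := key z hzV hzU'
        have h2 := key w hwV hwU
        have hw' : w ∈ minOpen X z := by
          rcases (h1 ▸ hwV : w ∈ U ∪ minOpen X z) with h | h
          · exact absurd h hwU
          · exact h
        have hz' : z ∈ minOpen X w := by
          rcases (h2 ▸ hzV : z ∈ U ∪ minOpen X w) with h | h
          · exact absurd h hzU'
          · exact h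
        exact Set.Subset.antisymm (minOpen_subset (isOpen_minOpen w) hz')
          (minOpen_subset (isOpen_minOpen z) hw')
    · rintro (rfl | hS)
      · exact ⟨⟨w, rfl⟩, minOpen_subset hV hwV⟩
      · exact MS_mono hlt.1 hS
  have hnot : minOpen X w ∉ MS U := fun hmem => hwU (hmem.2 (mem_minOpen w))
  rw [rk, hMS, Set.ncard_insert_of_notMem hnot (Set.toFinite _), rk]

/-- Pick a minimal element of a nonempty family of sets. -/
noncomputable def pickMin (s : Set (Set X)) (hs : s.Nonempty) : Set X :=
  ((Set.toFinite s).exists_minimalFor id s hs).choose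

lemma pickMin_mem (s : Set (Set X)) (hs : s.Nonempty) : pickMin s hs ∈ s :=
  ((Set.toFinite s).exists_minimalFor id s hs).choose_spec.1

lemma pickMin_min (s : Set (Set X)) (hs : s.Nonempty) :
    ∀ A ∈ s, A ⊆ pickMin s hs → A = pickMin s hs :=
  fun A hA hle => le_antisymm hle (((Set.toFinite s).exists_minimalFor id s hs).choose_spec.2 hA hle)

open scoped Classical in
/-- One step of the chain construction, trying to stay inside `W`. -/
noncomputable def nxt (W U : Set X) : Set X :=
  if h : {V : Set X | IsOpen V ∧ U ⊂ V ∧ V ⊆ W}.Nonempty then pickMin _ h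
  else if h2 : {V : Set X | IsOpen V ∧ U ⊂ V}.Nonempty then pickMin _ h2
  else U

open scoped Classical in
lemma nxt_spec (W U : Set X) (hU : IsOpen U) :
    IsOpen (nxt W U) ∧ U ⊆ nxt W U ∧ (U ≠ Set.univ → U ⊂ nxt W U) ∧
    (∀ A : Set X, IsOpen A → U ⊆ A → A ⊆ nxt W U → A = U ∨ A = nxt W U) := by
  unfold nxt
  split_ifs with h1 h2
  · have hm := pickMin_mem _ h1
    refine ⟨hm.1, hm.2.1.1, fun _ => hm.2.1, ?_⟩
    intro A hA hUA hAn
    rcases eq_or_ne A U with hAU | hAU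
    · exact Or.inl hAU
    · exact Or.inr (pickMin_min _ h1 A ⟨hA, lt_of_le_of_ne hUA (fun he => hAU he.symm), hAn.trans hm.2.2⟩ hAn)
  · have hm := pickMin_mem _ h2
    refine ⟨hm.1, hm.2.1, fun _ => hm.2, ?_⟩
    intro A hA hUA hAn
    rcases eq_or_ne A U with hAU | hAU
    · exact Or.inl hAU
    · exact Or.inr (pickMin_min _ h2 A ⟨hA, lt_of_le_of_ne hUA (fun he => hAU he.symm)⟩ hAn)
  · have hUuniv : U = Set.univ := by
      by_contra hne
      exact h2 ⟨Set.univ, isOpen_univ, Ne.lt_of_le hne (Set.subset_univ U)⟩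
    refine ⟨hU, subset_rfl, fun hne => absurd hUuniv hne, ?_⟩
    intro A _ hUA hAn
    exact Or.inl (Set.Subset.antisymm hAn hUA)

open scoped Classical in
lemma nxt_subset_W {W U : Set X} (hW : IsOpen W) (hUW : U ⊂ W) : nxt W U ⊆ W := by
  have h1 : {V : Set X | IsOpen V ∧ U ⊂ V ∧ V ⊆ W}.Nonempty :=
    ⟨W, hW, hUW, subset_rfl⟩
  rw [nxt, dif_pos h1]
  exact (pickMin_mem _ h1).2.2

end Aux

theorem stmt4 (X : Type*) [TopologicalSpace X] [Finite X] (x y : X) (k : ℕ)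
    (h : furth X x y = k) :
    ∃ c : ℕ → Set X, NestedSeq X x c ∧ c k = minOpen X x ∪ minOpen X y := by
  classical
  set W : Set X := minOpen X x ∪ minOpen X y with hW_def
  have hW : IsOpen W := (isOpen_minOpen x).union (isOpen_minOpen y)
  set c : ℕ → Set X := fun j => (nxt W)^[j] (minOpen X x) with hc_def
  have hc0 : c 0 = minOpen X x := rfl
  have hcsucc : ∀ j, c (j + 1) = nxt W (c j) := fun j =>
    Function.iterate_succ_apply' (nxt W) j (minOpen X x)
  -- openness
  have hopen : ∀ j, IsOpen (c j) := by
    intro j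
    induction j with
    | zero => exact isOpen_minOpen x
    | succ j ih => rw [hcsucc]; exact (nxt_spec W (c j) ih).1
  have hmono : ∀ j, c j ⊆ c (j + 1) := fun j =>
    (hcsucc j) ▸ (nxt_spec W (c j) (hopen j)).2.1
  have hns : NestedSeq X x c := by
    refine ⟨hc0, hopen, hmono, ?_, ?_⟩
    · intro j
      rcases eq_or_ne (c j) Set.univ with he | he
      · exact Or.inr he
      · left
        have hs := (nxt_spec W (c j) (hopen j)).2.2.1 he
        rw [hcsucc]
        exact hs.ne
    · intro j V hV h1 h2
      rcases (nxt_spec W (c j) (hopen j)).2.2.2 V hV h1 ((hcsucc j) ▸ h2) with h | h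
      · exact Or.inl h
      · exact Or.inr (h.trans (hcsucc j).symm)
  -- rank bookkeeping
  set r0 : ℕ := rk (minOpen X x) with hr0
  have hxW : minOpen X x ⊆ W := Set.subset_union_left
  have hr0le : r0 ≤ rk W := rk_mono hxW
  set m : ℕ := rk W - r0 with hm_def
  have hrkW : rk W = r0 + m := by omega
  -- the chain reaches W at step m
  have hchain : ∀ j, j ≤ m → c j ⊆ W ∧ rk (c j) = r0 + j := by
    intro j
    induction j with
    | zero => intro _; exact ⟨hxW, rfl⟩
    | succ j ih =>
      intro hj
      obtain ⟨hsub, hrk⟩ := ih (by omega)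
      have hne : c j ≠ W := by
        intro he
        rw [he] at hrk
        omega
      have hlt : c j ⊂ W := Ne.lt_of_le hne hsub
      have hsub' : c (j + 1) ⊆ W := (hcsucc j) ▸ nxt_subset_W hW hlt
      have hneu : c j ≠ Set.univ := by
        intro he
        exact hne (le_antisymm hsub (he ▸ Set.subset_univ W))
      have hstrict : c j ⊂ c (j + 1) :=
        (hcsucc j) ▸ (nxt_spec W (c j) (hopen j)).2.2.1 hneu
      have hcov := rk_cover (hopen j) (hopen (j + 1)) hstrict
        (fun A hA h1 h2 => by
          rcases (nxt_spec W (c j) (hopen j)).2.2.2 A hA h1 ((hcsucc j) ▸ h2) with h | h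
          · exact Or.inl h
          · exact Or.inr (h.trans (hcsucc j).symm))
      exact ⟨hsub', by omega⟩
  have hcmW : c m = W := by
    obtain ⟨hsub, hrk⟩ := hchain m le_rfl
    by_contra hne
    have := rk_lt hW (Ne.lt_of_le hne hsub)
    omega
  -- m is in the defining set
  have hyW : y ∈ W := Or.inr (mem_minOpen y)
  have hmem : m ∈ {k | ∃ c : ℕ → Set X, NestedSeq X x c ∧ y ∈ c k} :=
    ⟨c, hns, hcmW ▸ hyW⟩
  -- lower bound: every element of the set is ≥ m
  have hlb : ∀ j ∈ {k | ∃ c : ℕ → Set X, NestedSeq X x c ∧ y ∈ c k}, m ≤ j := by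
    rintro j ⟨d, ⟨hd0, hdopen, hdmono, _, hdcov⟩, hyj⟩
    have hrkd : ∀ i, rk (d i) ≤ r0 + i := by
      intro i
      induction i with
      | zero => rw [hd0]; omega
      | succ i ih =>
        rcases eq_or_ne (d i) (d (i + 1)) with he | he
        · rw [← he]; omega
        · have hstrict : d i ⊂ d (i + 1) := Ne.lt_of_le he (hdmono i)
          have := rk_cover (hdopen i) (hdopen (i + 1)) hstrict (hdcov i)
          omega
    have hd0j : minOpen X x ⊆ d j := by
      have : ∀ i, d 0 ⊆ d i := by
        intro i
        induction i with
        | zero => exact subset_rfl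
        | succ i ih => exact ih.trans (hdmono i)
      exact hd0 ▸ this j
    have hWdj : W ⊆ d j :=
      Set.union_subset hd0j (minOpen_subset (hdopen j) hyj)
    have := (rk_mono hWdj).trans (hrkd j)
    omega
  have hk : k = m := by
    rw [← h, furth]
    exact le_antisymm (Nat.sInf_le hmem) (hlb _ (Nat.sInf_mem ⟨m, hmem⟩))
  exact ⟨c, hns, hk ▸ hcmW⟩
end

section
/- Let A be a nonempty subset of a finite topological space X. Then for every a ∈ X, Ψ(a, A) = Ψ(a, cl(A)), where Ψ(a, S) = min over s ∈ S of Ψ(a, s) and cl(A) is the closure of A. -/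
open Set Topology

/-- The furtherness of a point `a` from a (nonempty) subset `S`: `min_{s ∈ S} Ψ(a,s)`. -/
noncomputable def furthToSet (X : Type*) [TopologicalSpace X] (a : X) (S : Set X) : ℕ :=
  sInf {k | ∃ s ∈ S, furth X a s = k}

/-- In a finite space, every nested sequence eventually reaches the whole space. -/
lemma nested_univ {X : Type*} [TopologicalSpace X] [Finite X] {x : X} {c : ℕ → Set X}
    (hc : NestedSeq X x c) : ∃ j, c j = Set.univ := by
  by_contra h
  push_neg at h
  have hs : StrictMono c := strictMono_nat_of_lt_succ fun j =>
    lt_of_le_of_ne (hc.2.2.1 j) ((hc.2.2.2.1 j).resolve_right (h j))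
  have : Finite ℕ := Finite.of_injective c hs.injective
  exact not_finite ℕ

theorem stmt18 (X : Type*) [TopologicalSpace X] [Finite X] (A : Set X) (hA : A.Nonempty)
    (a : X) : furthToSet X a A = furthToSet X a (closure A) := by
  obtain ⟨a0, ha0⟩ := hA
  have hSA : {k | ∃ s ∈ A, furth X a s = k}.Nonempty := ⟨furth X a a0, a0, ha0, rfl⟩
  have hT : {k | ∃ s ∈ closure A, furth X a s = k}.Nonempty :=
    ⟨furth X a a0, a0, subset_closure ha0, rfl⟩
  apply le_antisymm
  · -- hard direction
    obtain ⟨s, hs, hfs⟩ := Nat.sInf_mem hT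
    have key : ∃ t ∈ A, furth X a t ≤ furth X a s := by
      by_cases hK : {k | ∃ c : ℕ → Set X, NestedSeq X a c ∧ s ∈ c k}.Nonempty
      · obtain ⟨c, hc, hsm⟩ := Nat.sInf_mem hK
        have hopen : IsOpen (c (furth X a s)) := hc.2.1 _
        obtain ⟨t, htc, htA⟩ := mem_closure_iff.mp hs _ hopen hsm
        exact ⟨t, htA, Nat.sInf_le ⟨c, hc, htc⟩⟩
      · refine ⟨a0, ha0, ?_⟩
        have h1 : furth X a s = 0 := by
          rw [furth, Set.not_nonempty_iff_eq_empty.mp hK, Nat.sInf_empty]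
        have h2 : {k | ∃ c : ℕ → Set X, NestedSeq X a c ∧ a0 ∈ c k} = ∅ := by
          rw [Set.eq_empty_iff_forall_notMem]
          rintro k ⟨c, hc, -⟩
          obtain ⟨j, hj⟩ := nested_univ hc
          exact hK ⟨j, c, hc, hj ▸ Set.mem_univ s⟩
        rw [furth, h2, Nat.sInf_empty, h1]
    obtain ⟨t, htA, hle⟩ := key
    calc furthToSet X a A ≤ furth X a t := Nat.sInf_le ⟨t, htA, rfl⟩
      _ ≤ furth X a s := hle
      _ = furthToSet X a (closure A) := hfs
  · -- easy direction: A ⊆ closure A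
    obtain ⟨t, htA, hft⟩ := Nat.sInf_mem hSA
    calc furthToSet X a (closure A) ≤ furth X a t :=
          Nat.sInf_le ⟨t, subset_closure htA, rfl⟩
      _ = furthToSet X a A := hft
end
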